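/- arXiv:1302.2513 — 5 statements merged into one kernel-verified Lean document; each statement's English description precedes it below -/
import Mathlib

section
/- Let f(X_0,...,X_n) be a homogeneous polynomial over GF(q) of degree d < q vanishing at a point P ∈ PG(n,q). If the intersection of a hyperplane H with the hypersurface f = 0 contains two distinct complete (n-2)-dimensional projective subspaces, then H is a tangent hyperplane of f (tangent at any point of the intersection of the two subspaces). -/
open Polynomial in
lemma aux_eval {F : Type*} [CommRing F] {m : ℕ} (P v : Fin m → F) (t : F)
    (f : MvPolynomial (Fin m) F) :
    Polynomial.eval t (MvPolynomial.aeval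
      (fun i => Polynomial.C (P i) + Polynomial.C (v i) * Polynomial.X) f)
      = MvPolynomial.eval (fun i => P i + v i * t) f := by
  induction f using MvPolynomial.induction_on with
  | C a => simp
  | add p q hp hq => simp [hp, hq]
  | mul_X p i hp => simp [hp]

open Polynomial in
lemma aux_deg {F : Type*} [CommRing F] {m : ℕ} (P v : Fin m → F)
    (f : MvPolynomial (Fin m) F) :
    (MvPolynomial.aeval
      (fun i => Polynomial.C (P i) + Polynomial.C (v i) * Polynomial.X) f).natDegree
      ≤ f.totalDegree := by
  set σ : Fin m → F[X] := fun i => Polynomial.C (P i) + Polynomial.C (v i) * Polynomial.X with hσ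
  have hσd : ∀ i, (σ i).natDegree ≤ 1 := by
    intro i
    refine (natDegree_add_le _ _).trans (max_le (by simp) ?_)
    exact (natDegree_C_mul_le _ _).trans natDegree_X_le
  rw [MvPolynomial.aeval_def, MvPolynomial.eval₂_eq]
  refine (Polynomial.natDegree_sum_le _ _).trans ?_
  rw [Finset.fold_max_le]
  refine ⟨Nat.zero_le _, fun d hd => ?_⟩
  refine (natDegree_mul_le).trans ?_
  simp only [algebraMap_eq, natDegree_C, zero_add]
  refine (Polynomial.natDegree_prod_le _ _).trans ?_
  have : ∑ i ∈ d.support, ((σ i) ^ d i).natDegree ≤ ∑ i ∈ d.support, d i := by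
    refine Finset.sum_le_sum fun i _ => ?_
    calc ((σ i) ^ d i).natDegree ≤ d i * (σ i).natDegree := natDegree_pow_le
    _ ≤ d i * 1 := Nat.mul_le_mul_left _ (hσd i)
    _ = d i := Nat.mul_one _
  refine this.trans ?_
  have := MvPolynomial.le_totalDegree (p := f) (s := d) hd
  simpa [Finsupp.sum] using this

open Polynomial in
lemma aux_chain {F : Type*} [CommRing F] {m : ℕ} (P v : Fin m → F)
    (f : MvPolynomial (Fin m) F) :
    Polynomial.eval 0 (Polynomial.derivative (MvPolynomial.aeval
      (fun i => Polynomial.C (P i) + Polynomial.C (v i) * Polynomial.X) f))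
      = ∑ i : Fin m, MvPolynomial.eval P (MvPolynomial.pderiv i f) * v i := by
  induction f using MvPolynomial.induction_on with
  | C a => simp
  | add p q hp hq =>
      simp only [map_add, Polynomial.eval_add, hp, hq, add_mul, Finset.sum_add_distrib]
  | mul_X p i hp =>
      have h0 : Polynomial.eval 0 (MvPolynomial.aeval
          (fun i => Polynomial.C (P i) + Polynomial.C (v i) * Polynomial.X) p)
          = MvPolynomial.eval P p := by
        rw [aux_eval]; simp
      simp only [map_mul, MvPolynomial.aeval_X, derivative_mul, Polynomial.eval_add,
        Polynomial.eval_mul, h0, hp]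
      simp only [derivative_add, derivative_C, derivative_mul, derivative_X, zero_add,
        Polynomial.eval_add, Polynomial.eval_mul, Polynomial.eval_C, Polynomial.eval_X,
        mul_zero, mul_one, add_zero, Polynomial.eval_zero, zero_mul]
      simp only [MvPolynomial.pderiv_mul, MvPolynomial.pderiv_X, map_add, map_mul,
        MvPolynomial.eval_X, add_mul, Finset.sum_add_distrib, Finset.sum_mul]
      congr 1
      · exact Finset.sum_congr rfl fun x _ => by ring
      · rw [Finset.sum_eq_single i]
        · simp
        · intro j _ hj
          simp [Pi.single_apply, hj]
        · simp

open Polynomial in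
lemma aux_dir {F : Type*} [Field F] [Fintype F] {m d : ℕ}
    (f : MvPolynomial (Fin m) F) (hf : f.totalDegree ≤ d) (hd : d < Fintype.card F)
    (W : Submodule F (Fin m → F)) (hfW : ∀ x ∈ W, MvPolynomial.eval x f = 0)
    (P w : Fin m → F) (hP : P ∈ W) (hw : w ∈ W) :
    ∑ i : Fin m, MvPolynomial.eval P (MvPolynomial.pderiv i f) * w i = 0 := by
  set T : F[X] := MvPolynomial.aeval
    (fun i => Polynomial.C (P i) + Polynomial.C (w i) * Polynomial.X) f with hT
  have hT0 : T = 0 := by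
    refine Polynomial.eq_zero_of_natDegree_lt_card_of_eval_eq_zero' T Finset.univ
      (fun t _ => ?_) ?_
    · rw [hT, aux_eval]
      have : (fun i => P i + w i * t) = P + t • w := by
        funext i; simp [mul_comm]
      rw [this]
      exact hfW _ (W.add_mem hP (W.smul_mem t hw))
    · calc T.natDegree ≤ f.totalDegree := aux_deg P w f
      _ ≤ d := hf
      _ < Fintype.card F := hd
      _ = Finset.univ.card := (Finset.card_univ).symm
  rw [← aux_chain P w f, ← hT, hT0]
  simp

/-- Let `f` be homogeneous of degree `d < q` in `n+1` variables (a hypersurface in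
`PG(n,q)`).  Suppose a hyperplane `H` (an `n`-dimensional linear subspace of `F^(n+1)`)
contains two distinct complete `(n-2)`-dimensional projective subspaces (`(n-1)`-dimensional
linear subspaces `W₁ ≠ W₂`) on which `f` vanishes identically.  Then `H` is a tangent
hyperplane of `f` at any point `P` of the intersection `W₁ ⊓ W₂`: for every vector `v ∈ H`
the directional derivative `∑ i (∂f/∂X_i)(P) · v_i` vanishes. -/
theorem stmt6 (F : Type*) [Field F] [Fintype F] (n d : ℕ)
    (f : MvPolynomial (Fin (n + 1)) F) (hf : f.IsHomogeneous d)
    (hd : d < Fintype.card F)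
    (H W₁ W₂ : Submodule F (Fin (n + 1) → F))
    (hH : Module.finrank F H = n)
    (hW₁ : Module.finrank F W₁ = n - 1) (hW₂ : Module.finrank F W₂ = n - 1)
    (hne : W₁ ≠ W₂) (h₁H : W₁ ≤ H) (h₂H : W₂ ≤ H)
    (hf₁ : ∀ x ∈ W₁, MvPolynomial.eval x f = 0)
    (hf₂ : ∀ x ∈ W₂, MvPolynomial.eval x f = 0) :
    ∀ P ∈ W₁ ⊓ W₂, P ≠ 0 → ∀ v ∈ H,
      ∑ i : Fin (n + 1), MvPolynomial.eval P (MvPolynomial.pderiv i f) * v i = 0 := by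
  intro P hP hP0 v hv
  -- n ≥ 1, otherwise W₁ = W₂ = ⊥
  rcases Nat.eq_zero_or_pos n with hn | hn
  · exfalso
    apply hne
    have h₁ : W₁ = ⊥ := Submodule.finrank_eq_zero.mp (by omega)
    have h₂ : W₂ = ⊥ := Submodule.finrank_eq_zero.mp (by omega)
    rw [h₁, h₂]
  -- H = W₁ ⊔ W₂
  have hlt : W₁ < W₁ ⊔ W₂ := by
    rcases lt_or_eq_of_le (le_sup_left : W₁ ≤ W₁ ⊔ W₂) with h | h
    · exact h
    · exfalso
      apply hne
      exact (Submodule.eq_of_le_of_finrank_eq (h ▸ le_sup_right : W₂ ≤ W₁)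
        (by rw [hW₁, hW₂])).symm
  have hsup_le : Module.finrank F (W₁ ⊔ W₂ : Submodule F (Fin (n + 1) → F))
      ≤ Module.finrank F H := Submodule.finrank_mono (sup_le h₁H h₂H)
  have hsup_gt : Module.finrank F W₁
      < Module.finrank F (W₁ ⊔ W₂ : Submodule F (Fin (n + 1) → F)) :=
    Submodule.finrank_lt_finrank_of_lt hlt
  have hHsup : H = W₁ ⊔ W₂ := by
    refine (Submodule.eq_of_le_of_finrank_eq (sup_le h₁H h₂H) ?_).symm
    omega
  rw [hHsup] at hv
  obtain ⟨w₁, hw₁, w₂, hw₂, rfl⟩ := Submodule.mem_sup.mp hv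
  have htd : f.totalDegree ≤ d := hf.totalDegree_le
  have h1 := aux_dir f htd hd W₁ hf₁ P w₁ hP.1 hw₁
  have h2 := aux_dir f htd hd W₂ hf₂ P w₂ hP.2 hw₂
  calc ∑ i : Fin (n + 1), MvPolynomial.eval P (MvPolynomial.pderiv i f) * (w₁ + w₂) i
      = (∑ i : Fin (n + 1), MvPolynomial.eval P (MvPolynomial.pderiv i f) * w₁ i)
        + ∑ i : Fin (n + 1), MvPolynomial.eval P (MvPolynomial.pderiv i f) * w₂ i := by
        rw [← Finset.sum_add_distrib]
        exact Finset.sum_congr rfl fun i _ => by simp [mul_add]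
  _ = 0 := by rw [h1, h2, add_zero]
end

section
/- Let K be a {k,d}-arc of a projective plane of order s. Then k ≤ ds - s + d, and equality holds if and only if every line of the plane meets K in 0 or exactly d points. -/
open Configuration

section Aux

variable {P L : Type*} [Membership P L] [ProjectivePlane P L] [Fintype P] [Fintype L]

open Finset in
open scoped Classical in
/-- Key counting identity: for `p ∈ K`, the cardinality of `K` is one plus the sum over
lines through `p` of (points of `K` on that line minus one). -/
theorem stmt12_key (d : ℕ) (K : Finset P) {p : P} (hp : p ∈ K) :
    K.card = 1 + ∑ l ∈ Finset.univ.filter (fun l : L => p ∈ l),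
      (((K.filter (· ∈ l)).card) - 1) := by
  classical
  have hbi : K.erase p = (Finset.univ.filter (fun l : L => p ∈ l)).biUnion
      (fun l => (K.erase p).filter (· ∈ l)) := by
    ext q
    simp only [mem_biUnion, mem_filter, mem_univ, true_and, mem_erase]
    constructor
    · rintro ⟨hqp, hqK⟩
      refine ⟨HasLines.mkLine (Ne.symm hqp), (HasLines.mkLine_ax (Ne.symm hqp)).1,
        ⟨hqp, hqK⟩, (HasLines.mkLine_ax (Ne.symm hqp)).2⟩
    · rintro ⟨l, -, ⟨hqp, hqK⟩, -⟩
      exact ⟨hqp, hqK⟩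
  have hdisj : ∀ l₁ ∈ Finset.univ.filter (fun l : L => p ∈ l),
      ∀ l₂ ∈ Finset.univ.filter (fun l : L => p ∈ l), l₁ ≠ l₂ →
      Disjoint ((K.erase p).filter (· ∈ l₁)) ((K.erase p).filter (· ∈ l₂)) := by
    intro l₁ hl₁ l₂ hl₂ hne
    simp only [mem_filter, mem_univ, true_and] at hl₁ hl₂
    rw [Finset.disjoint_left]
    rintro q hq₁ hq₂
    simp only [mem_filter, mem_erase] at hq₁ hq₂
    rcases Nondegenerate.eq_or_eq hl₁ hq₁.2 hl₂ hq₂.2 with h | h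
    · exact hq₁.1.1 h.symm
    · exact hne h
  have hcard : K.card = 1 + (K.erase p).card := by
    rw [Finset.card_erase_of_mem hp]
    have := Finset.card_pos.mpr ⟨p, hp⟩
    omega
  rw [hcard, hbi, Finset.card_biUnion hdisj]
  congr 1
  refine Finset.sum_congr rfl (fun l hl => ?_)
  simp only [mem_filter, mem_univ, true_and] at hl
  have : (K.erase p).filter (· ∈ l) = (K.filter (· ∈ l)).erase p := by
    ext q
    simp only [mem_filter, mem_erase]
    tauto
  rw [this, Finset.card_erase_of_mem (Finset.mem_filter.mpr ⟨hp, hl⟩)]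

end Aux

/-- Let `K` be a `{k,d}`-arc (nonempty, `d ≥ 1`) of a projective plane of order `s`:
every line meets `K` in at most `d` points.  Then `k ≤ ds - s + d`, with equality if and
only if every line meets `K` in `0` or exactly `d` points. -/
theorem stmt12 (P L : Type*) [Membership P L] [ProjectivePlane P L] [Fintype P] [Fintype L]
    (d : ℕ) (hd : 1 ≤ d) (K : Finset P) (hK0 : K.Nonempty)
    (hK : ∀ l : L, ({p : P | p ∈ K ∧ p ∈ l}).ncard ≤ d) :
    K.card ≤ d * ProjectivePlane.order P L - ProjectivePlane.order P L + d ∧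
    (K.card = d * ProjectivePlane.order P L - ProjectivePlane.order P L + d ↔
      ∀ l : L, ({p : P | p ∈ K ∧ p ∈ l}).ncard = 0 ∨
        ({p : P | p ∈ K ∧ p ∈ l}).ncard = d) := by
  classical
  set s := ProjectivePlane.order P L with hs
  have hnc : ∀ l : L, ({p : P | p ∈ K ∧ p ∈ l}).ncard = (K.filter (· ∈ l)).card := by
    intro l
    have h : ({p : P | p ∈ K ∧ p ∈ l}) = ↑(K.filter (· ∈ l)) := by
      ext q; simp [Finset.mem_filter]
    rw [h, Set.ncard_coe_finset]
  have hK' : ∀ l : L, (K.filter (· ∈ l)).card ≤ d := fun l => (hnc l) ▸ hK l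
  have hTcard : ∀ p : P, (Finset.univ.filter (fun l : L => p ∈ l)).card = s + 1 := by
    intro p
    have h := ProjectivePlane.lineCount_eq L p
    rwa [lineCount, Nat.card_eq_fintype_card, Fintype.card_subtype] at h
  -- target arithmetic
  have htarget : d * s - s + d = s * (d - 1) + d := by
    obtain ⟨n, rfl⟩ := Nat.exists_eq_add_of_le hd
    have : (1 + n) * s = s + n * s := by ring
    rw [this]
    simp [Nat.mul_comm]
  -- the bound
  have hbound : K.card ≤ d * s - s + d := by
    obtain ⟨p, hp⟩ := hK0
    rw [stmt12_key (L := L) d K hp, htarget]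
    have hsum : ∑ l ∈ Finset.univ.filter (fun l : L => p ∈ l),
        (((K.filter (· ∈ l)).card) - 1) ≤
        ∑ _l ∈ Finset.univ.filter (fun l : L => p ∈ l), (d - 1) :=
      Finset.sum_le_sum (fun l _ => Nat.sub_le_sub_right (hK' l) 1)
    rw [Finset.sum_const, hTcard p, smul_eq_mul] at hsum
    have : (s + 1) * (d - 1) = s * (d - 1) + (d - 1) := by ring
    omega
  refine ⟨hbound, ?_, ?_⟩
  · -- equality → every line meets in 0 or d
    intro heq l
    rw [hnc l]
    by_contra hcon
    push_neg at hcon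
    obtain ⟨h0, hd'⟩ := hcon
    -- pick q ∈ K ∩ l
    have hne : (K.filter (· ∈ l)).Nonempty := Finset.card_pos.mp (Nat.pos_of_ne_zero h0)
    obtain ⟨q, hq⟩ := hne
    rw [Finset.mem_filter] at hq
    -- count from q: all fibers are ≤ d - 1 and sum to (s+1)(d-1); so each equals d-1
    have hkey := stmt12_key (L := L) d K hq.1
    rw [heq, htarget] at hkey
    have hsum : ∑ l' ∈ Finset.univ.filter (fun l' : L => q ∈ l'),
        (((K.filter (· ∈ l')).card) - 1) =
        ∑ _l' ∈ Finset.univ.filter (fun l' : L => q ∈ l'), (d - 1) := by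
      have h1 : (s + 1) * (d - 1) = s * (d - 1) + (d - 1) := by ring
      rw [Finset.sum_const, hTcard q, smul_eq_mul]
      omega
    have hall := (Finset.sum_eq_sum_iff_of_le
      (fun l' _ => Nat.sub_le_sub_right (hK' l') 1)).mp hsum
    have hl : l ∈ Finset.univ.filter (fun l' : L => q ∈ l') := by
      simp [hq.2]
    have := hall l hl
    have hpos : 1 ≤ (K.filter (· ∈ l)).card := Nat.one_le_iff_ne_zero.mpr h0
    omega
  · -- every line meets in 0 or d → equality
    intro hall
    obtain ⟨p, hp⟩ := hK0
    rw [stmt12_key (L := L) d K hp, htarget]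
    have hsum : ∑ l ∈ Finset.univ.filter (fun l : L => p ∈ l),
        (((K.filter (· ∈ l)).card) - 1) =
        ∑ _l ∈ Finset.univ.filter (fun l : L => p ∈ l), (d - 1) := by
      refine Finset.sum_congr rfl (fun l hl => ?_)
      simp only [Finset.mem_filter, Finset.mem_univ, true_and] at hl
      rcases hall l with h | h
      · rw [hnc l] at h
        exact absurd h (Finset.card_ne_zero_of_mem (Finset.mem_filter.mpr ⟨hp, hl⟩))
      · rw [hnc l] at h
        rw [h]
    rw [hsum, Finset.sum_const, hTcard p, smul_eq_mul]
    have : (s + 1) * (d - 1) = s * (d - 1) + (d - 1) := by ring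
    omega
end

section
/- Let K be a maximal {ds-s+d, d}-arc in a projective plane Π of order s. Then the set of lines of Π external to K (meeting K in no point) forms a maximal {s(s-d+1)/d, s/d}-arc in the dual plane; in particular every point of Π not in K lies on exactly s/d external lines. -/
open Configuration

/-- Cossu's theorem: let `K` be a maximal `{ds-s+d, d}`-arc in a projective plane of
order `s` (every line meets `K` in `0` or `d` points).  Then the set `E` of external
lines is a maximal `{s(s-d+1)/d, s/d}`-arc in the dual plane: `|E| · d = s(s-d+1)`,
every point lies on `0` or `s/d` lines of `E`, and every point not in `K` lies on
exactly `s/d` external lines. -/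
theorem stmt13 (P L : Type*) [Membership P L] [ProjectivePlane P L] [Fintype P] [Fintype L]
    (d : ℕ) (hd : 1 ≤ d) (hds : d ≤ ProjectivePlane.order P L)
    (K : Finset P) (hK0 : K.Nonempty)
    (hcard : K.card
      = d * ProjectivePlane.order P L - ProjectivePlane.order P L + d)
    (hK : ∀ l : L, ({p : P | p ∈ K ∧ p ∈ l}).ncard = 0 ∨
      ({p : P | p ∈ K ∧ p ∈ l}).ncard = d) :
    ({l : L | ∀ p ∈ K, p ∉ l}).ncard * d
        = ProjectivePlane.order P L * (ProjectivePlane.order P L - d + 1) ∧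
    (∀ q : P, ({l : L | (∀ p ∈ K, p ∉ l) ∧ q ∈ l}).ncard = 0 ∨
      ({l : L | (∀ p ∈ K, p ∉ l) ∧ q ∈ l}).ncard * d = ProjectivePlane.order P L) ∧
    (∀ q : P, q ∉ K →
      ({l : L | (∀ p ∈ K, p ∉ l) ∧ q ∈ l}).ncard * d = ProjectivePlane.order P L) := by
  classical
  set s := ProjectivePlane.order P L with hs
  have hKf : ∀ l : L, (K.filter (· ∈ l)).card = 0 ∨ (K.filter (· ∈ l)).card = d := by
    intro l
    have he : {p : P | p ∈ K ∧ p ∈ l} = ↑(K.filter (· ∈ l)) := by ext p; simp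
    have := hK l
    rwa [he, Set.ncard_coe_finset] at this
  haveI : Nonempty L := by
    obtain ⟨p₁, p₂, p₃, l₁, l₂, l₃, -⟩ := ProjectivePlane.exists_config (P := P) (L := L)
    exact ⟨l₁⟩
  have hEq : ∀ q : P, ({l : L | (∀ p ∈ K, p ∉ l) ∧ q ∈ l}).ncard
      = (Finset.univ.filter (fun l : L => (∀ p ∈ K, p ∉ l) ∧ q ∈ l)).card := by
    intro q
    rw [← Set.ncard_coe_finset]
    congr 1
    ext l; simp
  -- key counting through a point not in K
  have key : ∀ q : P, q ∉ K →
      (Finset.univ.filter (fun l : L => (∀ p ∈ K, p ∉ l) ∧ q ∈ l)).card * d = s := by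
    intro q hq
    set T := Finset.univ.filter (fun l : L => q ∈ l) with hT
    have hTcard : T.card = s + 1 := by
      have h1 := ProjectivePlane.lineCount_eq L q
      unfold lineCount at h1
      rw [Nat.card_eq_fintype_card, Fintype.card_subtype] at h1
      exact h1
    set f : P → L := fun p =>
      if h : p = q then Classical.arbitrary L else HasLines.mkLine h with hf
    have hmem : ∀ p ∈ K, f p ∈ T := by
      intro p hp
      have hpq : p ≠ q := fun h => hq (h ▸ hp)
      simp only [hf, dif_neg hpq, hT, Finset.mem_filter, Finset.mem_univ, true_and]
      exact (HasLines.mkLine_ax hpq).2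
    have hsum : K.card = ∑ l ∈ T, (K.filter (fun p => f p = l)).card :=
      Finset.card_eq_sum_card_fiberwise hmem
    have hfib : ∀ l ∈ T, K.filter (fun p => f p = l) = K.filter (· ∈ l) := by
      intro l hl
      have hql : q ∈ l := by simpa [hT] using hl
      ext p
      simp only [Finset.mem_filter, and_congr_right_iff]
      intro hp
      have hpq : p ≠ q := fun h => hq (h ▸ hp)
      simp only [hf, dif_neg hpq]
      constructor
      · rintro rfl; exact (HasLines.mkLine_ax hpq).1
      · intro hpl
        exact ((Nondegenerate.eq_or_eq (HasLines.mkLine_ax hpq).1 (HasLines.mkLine_ax hpq).2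
          hpl hql).resolve_left hpq)
    rw [Finset.sum_congr rfl (fun l hl => congrArg Finset.card (hfib l hl))] at hsum
    set T0 := T.filter (fun l => (K.filter (· ∈ l)).card = 0) with hT0
    set Td := T.filter (fun l => ¬(K.filter (· ∈ l)).card = 0) with hTd
    have hsplit : T0.card + Td.card = s + 1 := by
      rw [hT0, hTd, Finset.card_filter_add_card_filter_not, hTcard]
    have hsum2 : K.card = Td.card * d := by
      rw [hsum, ← Finset.sum_filter_add_sum_filter_not T (fun l => (K.filter (· ∈ l)).card = 0)]
      rw [Finset.sum_congr rfl (fun l hl => (Finset.mem_filter.mp hl).2)]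
      simp only [Finset.sum_const_zero, zero_add]
      rw [← hTd, Finset.sum_congr rfl
        (fun l hl => ((hKf l).resolve_left (Finset.mem_filter.mp hl).2 : _)),
        Finset.sum_const, smul_eq_mul]
    have hT0eq : Finset.univ.filter (fun l : L => (∀ p ∈ K, p ∉ l) ∧ q ∈ l) = T0 := by
      ext l
      simp only [hT0, hT, Finset.mem_filter, Finset.mem_univ, true_and, Finset.card_eq_zero,
        Finset.filter_eq_empty_iff]
      tauto
    rw [hT0eq]
    have hsd : s ≤ d * s := Nat.le_mul_of_pos_left s hd
    have h1 : T0.card * d + Td.card * d = (s + 1) * d := by rw [← Nat.add_mul, hsplit]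
    rw [← hsum2, hcard] at h1
    have h2 : (s + 1) * d = s * d + d := by ring
    have h3 : d * s = s * d := Nat.mul_comm d s
    omega
  have hEcard : ∀ q : P, q ∉ K →
      ({l : L | (∀ p ∈ K, p ∉ l) ∧ q ∈ l}).ncard * d = s := by
    intro q hq; rw [hEq q]; exact key q hq
  refine ⟨?_, ?_, hEcard⟩
  · -- double counting
    set E := Finset.univ.filter (fun l : L => ∀ p ∈ K, p ∉ l) with hE
    have hEn : ({l : L | ∀ p ∈ K, p ∉ l}).ncard = E.card := by
      rw [← Set.ncard_coe_finset]; congr 1; ext l; simp [hE]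
    have hdc : ∑ q : P, (E.filter (fun l => q ∈ l)).card = E.card * (s + 1) := by
      have h0 : ∀ q : P, (E.filter (fun l => q ∈ l)).card
          = ∑ l ∈ E, (if q ∈ l then 1 else 0) := fun q => by
        rw [Finset.card_filter]
      rw [Finset.sum_congr rfl (fun q _ => h0 q), Finset.sum_comm]
      have hpc : ∀ l : L, (∑ q : P, if q ∈ l then 1 else 0) = s + 1 := by
        intro l
        have h1 := ProjectivePlane.pointCount_eq P l
        unfold pointCount at h1
        rw [Nat.card_eq_fintype_card, Fintype.card_subtype] at h1
        rw [← Finset.card_filter]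
        exact h1
      rw [Finset.sum_congr rfl (fun l _ => hpc l), Finset.sum_const, smul_eq_mul]
    have hfilt : ∀ q : P, E.filter (fun l => q ∈ l)
        = Finset.univ.filter (fun l : L => (∀ p ∈ K, p ∉ l) ∧ q ∈ l) := by
      intro q; ext l; simp [hE]
    have hterm : ∀ q : P, (E.filter (fun l => q ∈ l)).card * d
        = if q ∈ K then 0 else s := by
      intro q
      by_cases hq : q ∈ K
      · simp only [if_pos hq]
        have : E.filter (fun l => q ∈ l) = ∅ := by
          rw [Finset.filter_eq_empty_iff]
          intro l hl
          simp only [hE, Finset.mem_filter] at hl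
          exact fun hql => hl.2 q hq hql
        rw [this]; simp
      · rw [if_neg hq, hfilt]; exact key q hq
    have hsum : (∑ q : P, (E.filter (fun l => q ∈ l)).card) * d
        = (Fintype.card P - K.card) * s := by
      rw [Finset.sum_mul, Finset.sum_congr rfl (fun q _ => hterm q), Finset.sum_ite,
        Finset.sum_const_zero, Finset.sum_const, smul_eq_mul, zero_add]
      congr 1
      have : Finset.univ.filter (fun q : P => ¬ q ∈ K) = Kᶜ := by
        ext q; simp
      rw [this, Finset.card_compl]
    rw [hdc] at hsum
    have hcp : Fintype.card P = s ^ 2 + s + 1 := ProjectivePlane.card_points P L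
    have hsd : s ≤ d * s := Nat.le_mul_of_pos_left s hd
    have hds2 : d * s ≤ s ^ 2 := by
      rw [pow_two]
      exact Nat.mul_le_mul_right s hds
    have hle : d * s - s + d ≤ s ^ 2 + s + 1 := by omega
    have hid : (Fintype.card P - K.card) * s = (s * (s - d + 1)) * (s + 1) := by
      rw [hcp, hcard]
      zify [hsd, hle, hds]
      ring
    rw [hid] at hsum
    have hcancel : E.card * d = s * (s - d + 1) := by
      have h2 : (E.card * d) * (s + 1) = (s * (s - d + 1)) * (s + 1) := by
        rw [← hsum]; ring
      exact Nat.eq_of_mul_eq_mul_right (Nat.succ_pos s) h2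
    rw [hEn]
    exact hcancel
  · intro q
    by_cases hq : q ∈ K
    · left
      rw [hEq q]
      simp only [Finset.card_eq_zero, Finset.filter_eq_empty_iff]
      intro l _
      simp only [not_and]
      exact fun hl => hl q hq
    · right; exact hEcard q hq
end

section
/- If a projective plane of order s contains a maximal {ds-s+d, d}-arc with 1 < d < s, then d divides s. -/
/-!
The lines through a point `x` outside the arc partition it, and each meets it in `0` or `d`
points, so `d ∣ ds - s + d`, i.e. `d ∣ s`. Such an `x` exists because the arc has fewer than
`s² + s + 1` points.
-/

open Configuration Finset

namespace Configuration

variable {P L : Type*} [Membership P L]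

open Classical in
theorem HasLines.card_eq_sum_card_filter_mem_of_notMem [HasLines P L] [Fintype L]
    {K : Finset P} {x : P} (hx : x ∉ K) :
    #K = ∑ l : L with x ∈ l, #{p ∈ K | p ∈ l} := by
  rw [← card_biUnion]
  · congr 1
    ext p
    simp only [mem_biUnion, mem_filter, mem_univ, true_and]
    refine ⟨fun hp => ?_, fun ⟨_, _, hp, _⟩ => hp⟩
    have hpx : p ≠ x := ne_of_mem_of_not_mem hp hx
    exact ⟨mkLine hpx, (mkLine_ax hpx).2, hp, (mkLine_ax hpx).1⟩
  · intro l₁ hl₁ l₂ hl₂ hne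
    simp only [coe_filter, mem_univ, true_and, Set.mem_ofPred_eq] at hl₁ hl₂
    refine disjoint_left.mpr fun p hp₁ hp₂ => hne ?_
    rw [mem_filter] at hp₁ hp₂
    exact (Nondegenerate.eq_or_eq hp₁.2 hl₁ hp₂.2 hl₂).resolve_left
      (ne_of_mem_of_not_mem hp₁.1 hx)

open Classical in
theorem HasLines.dvd_card_of_dvd_card_filter_mem [HasLines P L] [Fintype L]
    {K : Finset P} {x : P} (hx : x ∉ K) {d : ℕ} (hd : ∀ l : L, d ∣ #{p ∈ K | p ∈ l}) :
    d ∣ #K := by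
  rw [card_eq_sum_card_filter_mem_of_notMem (L := L) hx]
  exact dvd_sum fun l _ => hd l

end Configuration

theorem Nat.dvd_of_dvd_mul_sub_add {d s : ℕ} (hd : 1 ≤ d) (h : d ∣ d * s - s + d) : d ∣ s := by
  have hsum : d * s - s + d + s = d * (s + 1) := by
    have : s ≤ d * s := Nat.le_mul_of_pos_left s hd
    rw [Nat.mul_succ]
    omega
  exact (Nat.dvd_add_right h).mp (hsum ▸ Dvd.intro _ rfl)

theorem stmt14_general (P L : Type*) [Membership P L] [ProjectivePlane P L] [Fintype P] [Fintype L]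
    (d : ℕ) (hd1 : 1 < d) (hds : d < ProjectivePlane.order P L)
    (K : Finset P)
    (hcard : K.card
      = d * ProjectivePlane.order P L - ProjectivePlane.order P L + d)
    (hK : ∀ l : L, ({p : P | p ∈ K ∧ p ∈ l}).ncard = 0 ∨
      ({p : P | p ∈ K ∧ p ∈ l}).ncard = d) :
    d ∣ ProjectivePlane.order P L := by
  classical
  set s := ProjectivePlane.order P L
  have hK_lt : #K < Fintype.card P := by
    rw [hcard, ProjectivePlane.card_points P L]
    calc d * s - s + d ≤ d * (s + 1) := by rw [Nat.mul_succ]; omega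
      _ ≤ s * (s + 1) := Nat.mul_le_mul_right _ hds.le
      _ < s ^ 2 + s + 1 := by rw [sq, Nat.mul_succ]; omega
  obtain ⟨x, -, hx⟩ := exists_mem_notMem_of_card_lt_card (s := K) (t := univ) (by simpa)
  have hd_line : ∀ l : L, d ∣ #{p ∈ K | p ∈ l} := fun l => by
    rw [← Set.ncard_coe_finset, coe_filter]
    rcases hK l with h | h <;> simp [h]
  have hdK := HasLines.dvd_card_of_dvd_card_filter_mem hx hd_line
  exact Nat.dvd_of_dvd_mul_sub_add hd1.le (hcard ▸ hdK)

/-- If a projective plane of order `s` contains a maximal `{ds-s+d, d}`-arc with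
`1 < d < s`, then `d` divides `s`. -/
theorem stmt14 (P L : Type*) [Membership P L] [ProjectivePlane P L] [Fintype P] [Fintype L]
    (d : ℕ) (hd1 : 1 < d) (hds : d < ProjectivePlane.order P L)
    (K : Finset P) (hK0 : K.Nonempty)
    (hcard : K.card
      = d * ProjectivePlane.order P L - ProjectivePlane.order P L + d)
    (hK : ∀ l : L, ({p : P | p ∈ K ∧ p ∈ l}).ncard = 0 ∨
      ({p : P | p ∈ K ∧ p ∈ l}).ncard = d) :
    d ∣ ProjectivePlane.order P L :=
  stmt14_general P L d hd1 hds K hcard hK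
end

section
/- Let q be even and K a maximal {k,d}-arc in PG(2,q) embedded as the hyperplane at infinity H_∞ of PG(3,q). Define T_2*(K): points are the affine points of PG(3,q)\H_∞; lines are the lines of PG(3,q) not in H_∞ meeting H_∞ in a point of K; incidence is inherited. Then T_2*(K) is a partial geometry with parameters s = q-1, t = k-1 = (d-1)(q+1), and α = d-1. -/
open scoped LinearAlgebra.Projectivization
open Projectivization

/-!
The lines of `T₂*(K)` are the cosets `p + F k` with `⟨k⟩ ∈ K`.  Through an affine point `x`
off such a line `ℓ`, the joins of `x` with the points of `ℓ` have as directions exactly the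
points of the projective line `⟨k, p - x⟩` at infinity other than `⟨k⟩`, each once: this is
the affine chart `c ↦ ⟨(p - x) + c k⟩` of that line.  So the lines of `T₂*(K)` through `x`
meeting `ℓ` correspond to the points of `K` on `⟨k, p - x⟩` other than `⟨k⟩`, and there are
`d - 1` of them.
-/

/-- A family `L` of subsets ("lines") of a point set `X` is a partial geometry with
parameters `s`, `t`, `α`: every line has `s+1` points, every point is on `t+1` lines,
two distinct points are on at most one common line, two distinct lines meet in at most
one point, and for every anti-flag `(x, ℓ)` there are exactly `α` pairs `(y, M)` with
`x ∈ M`, `y ∈ M`, `y ∈ ℓ`. -/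
def IsPartialGeometryLines {X : Type*} (L : Set (Set X)) (s t a : ℕ) : Prop :=
  (∀ ℓ ∈ L, ℓ.ncard = s + 1) ∧
  (∀ x : X, {ℓ ∈ L | x ∈ ℓ}.ncard = t + 1) ∧
  (∀ x y : X, x ≠ y → {ℓ ∈ L | x ∈ ℓ ∧ y ∈ ℓ}.ncard ≤ 1) ∧
  (∀ ℓ ∈ L, ∀ m ∈ L, ℓ ≠ m → (ℓ ∩ m).ncard ≤ 1) ∧
  (∀ (x : X), ∀ ℓ ∈ L, x ∉ ℓ →
    ({p : X × Set X | p.2 ∈ L ∧ x ∈ p.2 ∧ p.1 ∈ p.2 ∧ p.1 ∈ ℓ}).ncard = a)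

section

variable {F V : Type*} [Field F] [AddCommGroup V] [Module F V]

section AffineLine

variable (F) in
def affLine (p v : V) : Set V := {x | ∃ c : F, x = p + c • v}

theorem mem_affLine_self (p v : V) : p ∈ affLine F p v := ⟨0, by simp⟩

theorem affLine_eq_of_mem {p v x : V} (hx : x ∈ affLine F p v) :
    affLine F p v = affLine F x v := by
  obtain ⟨c₀, rfl⟩ := hx
  ext y
  constructor
  · rintro ⟨c, rfl⟩; exact ⟨c - c₀, by rw [sub_smul]; abel⟩
  · rintro ⟨c, rfl⟩; exact ⟨c₀ + c, by rw [add_smul]; abel⟩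

theorem affLine_smul (x v : V) {a : F} (ha : a ≠ 0) :
    affLine F x (a • v) = affLine F x v := by
  ext y
  constructor
  · rintro ⟨c, rfl⟩; exact ⟨c * a, by rw [mul_smul]⟩
  · rintro ⟨c, rfl⟩; exact ⟨c * a⁻¹, by rw [smul_smul, inv_mul_cancel_right₀ ha]⟩

theorem sub_eq_smul_of_mem_affLine {p v x y : V} (hx : x ∈ affLine F p v)
    (hy : y ∈ affLine F p v) : ∃ c : F, y - x = c • v := by
  obtain ⟨c₁, rfl⟩ := hx
  obtain ⟨c₂, rfl⟩ := hy
  exact ⟨c₂ - c₁, by rw [sub_smul]; abel⟩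

theorem affLine_eq_of_mem_of_mem {p v x y : V} (hx : x ∈ affLine F p v)
    (hy : y ∈ affLine F p v) (hxy : x ≠ y) : affLine F p v = affLine F x (y - x) := by
  obtain ⟨c, hc⟩ := sub_eq_smul_of_mem_affLine hx hy
  have hc0 : c ≠ 0 := by
    rintro rfl
    rw [zero_smul, sub_eq_zero] at hc
    exact hxy hc.symm
  rw [affLine_eq_of_mem hx, hc, affLine_smul x v hc0]

theorem ncard_affLine (p : V) {v : V} (hv : v ≠ 0) : (affLine F p v).ncard = Nat.card F := by
  have hrange : affLine F p v = Set.range (fun c : F => p + c • v) := by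
    ext y; simp [affLine, eq_comm]
  have hinj : Function.Injective (fun c : F => p + c • v) :=
    fun a b hab => smul_left_injective F hv (add_left_cancel hab)
  rw [hrange, ← Nat.card_coe_set_eq, Nat.card_range_of_injective hinj]

theorem mk_sub_eq_of_mem_affLine {p v x y : V} (hv : v ≠ 0) (hx : x ∈ affLine F p v)
    (hy : y ∈ affLine F p v) (hxy : y - x ≠ 0) : mk F (y - x) hxy = mk F v hv := by
  obtain ⟨c, hc⟩ := sub_eq_smul_of_mem_affLine hx hy
  exact (mk_eq_mk_iff' F _ _ hxy hv).2 ⟨c, hc.symm⟩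

theorem affLine_rep_mk (x : V) {u : V} (hu : u ≠ 0) :
    affLine F x (mk F u hu).rep = affLine F x u := by
  obtain ⟨a, ha⟩ := exists_smul_eq_mk_rep F u hu
  rw [← ha, Units.smul_def, affLine_smul x u a.ne_zero]

theorem affLine_rep_injective (x : V) :
    Function.Injective fun k : ℙ F V => affLine F x k.rep := by
  intro k k' h
  have hmem : x + k'.rep ∈ affLine F x k.rep := by
    rw [show affLine F x k.rep = affLine F x k'.rep from h]; exact ⟨1, by rw [one_smul]⟩
  have hne : x + k'.rep - x ≠ 0 := by simpa using k'.rep_nonzero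
  have := mk_sub_eq_of_mem_affLine k.rep_nonzero (mem_affLine_self x _) hmem hne
  simp only [add_sub_cancel_left, mk_rep] at this
  exact this.symm

end AffineLine

section DirectionLines

variable (F) in
def directionLines (K : Set (ℙ F V)) : Set (Set V) :=
  {ℓ | ∃ p : V, ∃ k ∈ K, ℓ = affLine F p k.rep}

variable {K : Set (ℙ F V)}

theorem affLine_mem_directionLines (x : V) {u : V} (hu : u ≠ 0) (huK : mk F u hu ∈ K) :
    affLine F x u ∈ directionLines F K :=
  ⟨x, _, huK, (affLine_rep_mk x hu).symm⟩

theorem eq_affLine_of_mem_directionLines {ℓ : Set V} (hℓ : ℓ ∈ directionLines F K) {x y : V}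
    (hx : x ∈ ℓ) (hy : y ∈ ℓ) (hxy : y - x ≠ 0) :
    ℓ = affLine F x (y - x) ∧ mk F (y - x) hxy ∈ K := by
  obtain ⟨p, k, hk, rfl⟩ := hℓ
  refine ⟨affLine_eq_of_mem_of_mem hx hy fun h => hxy (by rw [h, sub_self]), ?_⟩
  rwa [mk_sub_eq_of_mem_affLine k.rep_nonzero hx hy hxy, mk_rep]

theorem ncard_directionLines_le_one_of_mem_of_mem {x y : V} (hxy : x ≠ y) :
    {ℓ ∈ directionLines F K | x ∈ ℓ ∧ y ∈ ℓ}.ncard ≤ 1 := by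
  have hne : y - x ≠ 0 := sub_ne_zero.2 hxy.symm
  have hsub : {ℓ ∈ directionLines F K | x ∈ ℓ ∧ y ∈ ℓ}.Subsingleton := by
    rintro ℓ ⟨hℓ, hxℓ, hyℓ⟩ m ⟨hm, hxm, hym⟩
    rw [(eq_affLine_of_mem_directionLines hℓ hxℓ hyℓ hne).1,
      (eq_affLine_of_mem_directionLines hm hxm hym hne).1]
  exact (Set.ncard_le_one hsub.finite).2 fun _ ha _ hb => hsub ha hb

theorem ncard_inter_le_one_of_mem_directionLines {ℓ m : Set V} (hℓ : ℓ ∈ directionLines F K)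
    (hm : m ∈ directionLines F K) (hℓm : ℓ ≠ m) : (ℓ ∩ m).ncard ≤ 1 := by
  have hsub : (ℓ ∩ m).Subsingleton := by
    rintro x ⟨hxℓ, hxm⟩ y ⟨hyℓ, hym⟩
    by_contra hxy
    have hne : y - x ≠ 0 := sub_ne_zero.2 (Ne.symm hxy)
    exact hℓm <| (eq_affLine_of_mem_directionLines hℓ hxℓ hyℓ hne).1.trans
      (eq_affLine_of_mem_directionLines hm hxm hym hne).1.symm
  exact (Set.ncard_le_one hsub.finite).2 fun _ ha _ hb => hsub ha hb

theorem setOf_mem_directionLines_mem (x : V) :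
    {ℓ ∈ directionLines F K | x ∈ ℓ} = (fun k : ℙ F V => affLine F x k.rep) '' K := by
  ext ℓ
  constructor
  · rintro ⟨⟨p, k, hk, rfl⟩, hx⟩
    exact ⟨k, hk, (affLine_eq_of_mem hx).symm⟩
  · rintro ⟨k, hk, rfl⟩
    exact ⟨⟨x, k, hk, rfl⟩, mem_affLine_self x _⟩

theorem ncard_setOf_mem_directionLines_mem (x : V) :
    {ℓ ∈ directionLines F K | x ∈ ℓ}.ncard = K.ncard := by
  rw [setOf_mem_directionLines_mem, (affLine_rep_injective x).injOn.ncard_image]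

end DirectionLines

section ProjectiveLine

variable (F) in
theorem submodule_mk_le_span_pair {v : V} (hv : v ≠ 0) (w : V) :
    (mk F v hv).submodule ≤ Submodule.span F {v, w} :=
  (Submodule.span_singleton_le_iff_mem _ _).2 (Submodule.subset_span (by simp))

variable {v w : V}

theorem LinearIndependent.add_smul_ne_zero (hvw : LinearIndependent F ![v, w]) (c : F) :
    w + c • v ≠ 0 := by
  intro h
  have := (LinearIndependent.pair_iff.1 hvw) c 1 (by rw [← h, one_smul, add_comm])
  exact one_ne_zero this.2

def projLineChart (hvw : LinearIndependent F ![v, w]) (c : F) : ℙ F V :=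
  mk F (w + c • v) (hvw.add_smul_ne_zero c)

theorem LinearIndependent.finrank_span_pair (hvw : LinearIndependent F ![v, w]) :
    Module.finrank F (Submodule.span F {v, w}) = 2 := by
  rw [← Matrix.range_cons_cons_empty, finrank_span_eq_card hvw, Fintype.card_fin]

variable (hvw : LinearIndependent F ![v, w])

theorem projLineChart_injective : Function.Injective (projLineChart hvw) := by
  intro c c' h
  obtain ⟨a, ha⟩ := (mk_eq_mk_iff' F _ _ _ _).1 h
  have hcomb : (a * c' - c) • v + (a - 1) • w = 0 := by
    linear_combination (norm := module) ha
  obtain ⟨hc, ha1⟩ := LinearIndependent.pair_iff.1 hvw _ _ hcomb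
  rw [sub_eq_zero.1 ha1, one_mul, sub_eq_zero] at hc
  exact hc.symm

theorem range_projLineChart :
    Set.range (projLineChart hvw) =
      {k : ℙ F V | k.submodule ≤ Submodule.span F {v, w}} \ {mk F v (hvw.ne_zero 0)} := by
  have hv : v ≠ 0 := hvw.ne_zero 0
  have hvW : v ∈ Submodule.span F {v, w} := Submodule.subset_span (by simp)
  have hwW : w ∈ Submodule.span F {v, w} := Submodule.subset_span (by simp)
  ext k
  constructor
  · rintro ⟨c, rfl⟩
    refine ⟨?_, fun hk => ?_⟩
    · rw [Set.mem_ofPred_eq, projLineChart, submodule_mk, Submodule.span_singleton_le_iff_mem]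
      exact Submodule.add_mem _ hwW (Submodule.smul_mem _ c hvW)
    · obtain ⟨a, ha⟩ := (mk_eq_mk_iff' F _ _ _ hv).1 hk
      have hcomb : (a - c) • v + (-1 : F) • w = 0 := by
        linear_combination (norm := module) ha
      exact neg_ne_zero.2 one_ne_zero (LinearIndependent.pair_iff.1 hvw _ _ hcomb).2
  · rintro ⟨hkW, hkv⟩
    have hrep : k.rep ∈ Submodule.span F {v, w} := by
      apply hkW
      rw [submodule_eq]
      exact Submodule.mem_span_singleton_self _
    obtain ⟨a, b, hab⟩ := Submodule.mem_span_pair.1 hrep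
    have hb : b ≠ 0 := by
      rintro rfl
      refine hkv ?_
      rw [Set.mem_singleton_iff, ← mk_rep k]
      exact (mk_eq_mk_iff' F _ _ _ hv).2 ⟨a, by rw [← hab, zero_smul, add_zero]⟩
    refine ⟨b⁻¹ * a, ?_⟩
    rw [projLineChart, ← mk_rep k, mk_eq_mk_iff']
    refine ⟨b⁻¹, ?_⟩
    rw [← hab, smul_add, smul_smul, smul_smul, inv_mul_cancel₀ hb, one_smul, add_comm]

theorem ncard_setOf_projLineChart_mem {K : Set (ℙ F V)}
    (hvK : mk F v (hvw.ne_zero 0) ∈ K) :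
    {c | projLineChart hvw c ∈ K}.ncard =
      {k | k ∈ K ∧ k.submodule ≤ Submodule.span F {v, w}}.ncard - 1 := by
  have hvKW : mk F v (hvw.ne_zero 0) ∈ K ∩ {k | k.submodule ≤ Submodule.span F {v, w}} :=
    ⟨hvK, submodule_mk_le_span_pair F _ w⟩
  have hpre : {c | projLineChart hvw c ∈ K} =
      projLineChart hvw ⁻¹' (K ∩ Set.range (projLineChart hvw)) := by
    ext c; simp
  rw [hpre, Set.ncard_preimage_of_injective_subset_range (projLineChart_injective hvw)
    Set.inter_subset_right, range_projLineChart, ← Set.inter_sdiff_assoc,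
    Set.ncard_sdiff_singleton_of_mem hvKW]
  rfl

end ProjectiveLine

section AntiFlag

variable {K : Set (ℙ F V)} {x p : V} {k : ℙ F V}

theorem linearIndependent_rep_sub_of_notMem_affLine (hx : x ∉ affLine F p k.rep) :
    LinearIndependent F ![k.rep, p - x] :=
  (LinearIndependent.pair_iff' k.rep_nonzero).2 fun a ha =>
    hx ⟨-a, by rw [neg_smul, ha]; abel⟩

theorem setOf_antiflag_eq_image (hx : x ∉ affLine F p k.rep) :
    {q : V × Set V | q.2 ∈ directionLines F K ∧ x ∈ q.2 ∧ q.1 ∈ q.2 ∧ q.1 ∈ affLine F p k.rep} =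
      (fun c : F => (p + c • k.rep, affLine F x (p - x + c • k.rep))) ''
        {c | projLineChart (linearIndependent_rep_sub_of_notMem_affLine hx) c ∈ K} := by
  ext ⟨y, M⟩
  simp only [Set.mem_ofPred_eq, Set.mem_image, Prod.mk.injEq]
  constructor
  · rintro ⟨hM, hxM, hyM, c, rfl⟩
    have hyx : p + c • k.rep - x = p - x + c • k.rep := by abel
    have hne : p + c • k.rep - x ≠ 0 := fun h => hx ⟨c, (sub_eq_zero.1 h).symm⟩
    obtain ⟨rfl, hK⟩ := eq_affLine_of_mem_directionLines hM hxM hyM hne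
    refine ⟨c, ?_, rfl, by rw [hyx]⟩
    rw [projLineChart]
    convert hK using 2
    exact hyx.symm
  · rintro ⟨c, hc, rfl, rfl⟩
    exact ⟨affLine_mem_directionLines x _ hc, mem_affLine_self x _,
      ⟨1, by rw [one_smul]; abel⟩, ⟨c, rfl⟩⟩

theorem ncard_setOf_antiflag (hk : k ∈ K) (hx : x ∉ affLine F p k.rep) :
    {q : V × Set V |
        q.2 ∈ directionLines F K ∧ x ∈ q.2 ∧ q.1 ∈ q.2 ∧ q.1 ∈ affLine F p k.rep}.ncard =
      {k' | k' ∈ K ∧ k'.submodule ≤ Submodule.span F {k.rep, p - x}}.ncard - 1 := by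
  have hinj :
      Function.Injective fun c : F => (p + c • k.rep, affLine F x (p - x + c • k.rep)) :=
    fun a b hab => smul_left_injective F k.rep_nonzero (add_left_cancel (Prod.ext_iff.1 hab).1)
  rw [setOf_antiflag_eq_image hx, Set.ncard_image_of_injective _ hinj,
    ncard_setOf_projLineChart_mem _ (by rwa [mk_rep])]

end AntiFlag

end

theorem stmt15_general (F : Type*) [Field F] [Fintype F]
    (d : ℕ) (hd : 1 ≤ d) (K : Finset (ℙ F (Fin 3 → F)))
    (hcard : K.card = d * Fintype.card F - Fintype.card F + d)
    (harc : ∀ W : Submodule F (Fin 3 → F), Module.finrank F W = 2 →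
      ({k : ℙ F (Fin 3 → F) | k ∈ K ∧ k.submodule ≤ W}).ncard = 0 ∨
      ({k : ℙ F (Fin 3 → F) | k ∈ K ∧ k.submodule ≤ W}).ncard = d) :
    IsPartialGeometryLines
      {ℓ : Set (Fin 3 → F) | ∃ p : Fin 3 → F, ∃ k ∈ K,
        ℓ = {x | ∃ c : F, x = p + c • k.rep}}
      (Fintype.card F - 1) ((d - 1) * (Fintype.card F + 1)) (d - 1) := by
  change IsPartialGeometryLines (directionLines F (K : Set (ℙ F (Fin 3 → F)))) _ _ _
  have hq : 0 < Fintype.card F := Fintype.card_pos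
  refine ⟨?_, fun x => ?_, fun _ _ => ncard_directionLines_le_one_of_mem_of_mem,
    fun ℓ hℓ m hm => ncard_inter_le_one_of_mem_directionLines hℓ hm, ?_⟩
  · rintro ℓ ⟨p, k, -, rfl⟩
    rw [ncard_affLine p k.rep_nonzero, Nat.card_eq_fintype_card]
    omega
  · rw [ncard_setOf_mem_directionLines_mem, Set.ncard_coe_finset, hcard]
    obtain ⟨e, rfl⟩ := Nat.exists_eq_add_of_le hd
    simp only [add_mul, one_mul, Nat.add_sub_cancel_left]
    ring
  · rintro x ℓ ⟨p, k, hk, rfl⟩ hx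
    have hplane := (linearIndependent_rep_sub_of_notMem_affLine hx).finrank_span_pair
    have hkW : k ∈ {k' | k' ∈ K ∧ k'.submodule ≤ Submodule.span F {k.rep, p - x}} :=
      ⟨hk, by simpa only [mk_rep] using submodule_mk_le_span_pair F k.rep_nonzero (p - x)⟩
    rw [ncard_setOf_antiflag hk hx]
    rcases harc _ hplane with h | h
    · exact absurd h (Set.ncard_ne_zero_of_mem hkW (Set.toFinite _))
    · exact congrArg (· - 1) h

/-- Let `q` be even and `K` a maximal `{k,d}`-arc in the plane at infinity `PG(2,q)` of
`PG(3,q)` (directions are points of `ℙ F F³`; every line of the plane at infinity meets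
`K` in `0` or `d` points and `|K| = dq - q + d`).  The incidence structure `T₂*(K)`,
whose points are the affine points of `AG(3,q)` and whose lines are the affine lines
with direction in `K`, is a partial geometry with parameters `s = q-1`,
`t = k - 1 = (d-1)(q+1)` and `α = d-1`. -/
theorem stmt15 (F : Type*) [Field F] [Fintype F] (hq : Even (Fintype.card F))
    (d : ℕ) (hd : 1 ≤ d) (K : Finset (ℙ F (Fin 3 → F)))
    (hcard : K.card = d * Fintype.card F - Fintype.card F + d)
    (harc : ∀ W : Submodule F (Fin 3 → F), Module.finrank F W = 2 →
      ({k : ℙ F (Fin 3 → F) | k ∈ K ∧ k.submodule ≤ W}).ncard = 0 ∨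
      ({k : ℙ F (Fin 3 → F) | k ∈ K ∧ k.submodule ≤ W}).ncard = d) :
    IsPartialGeometryLines
      {ℓ : Set (Fin 3 → F) | ∃ p : Fin 3 → F, ∃ k ∈ K,
        ℓ = {x | ∃ c : F, x = p + c • k.rep}}
      (Fintype.card F - 1) ((d - 1) * (Fintype.card F + 1)) (d - 1) :=
  stmt15_general F d hd K hcard harc
end
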